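/- arXiv:0805.1441 — 4 statements merged into one kernel-verified Lean document; each statement's English description precedes it below -/
import Mathlib

section
/- Let σ be a synchronisation (for fixed injective relations g : A → Y → Prop and h : B → Y → Prop) and let c ∈ σ. Then the set γ_c = ⋂ {τ | τ is a synchronisation and c ∈ τ} is a path, c ∈ γ_c, and γ_c ⊆ σ. -/
/-- A relation `R : A → Z → Prop` is injective if `R a z` and `R a' z` imply `a = a'`. -/
def IsInjRel {A Z : Type*} (R : A → Z → Prop) : Prop :=
  ∀ ⦃a a' : A⦄ ⦃z : Z⦄, R a z → R a' z → a = a'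

/-- Image of a set under a relation. -/
def RelImage {A Z : Type*} (R : A → Z → Prop) (α : Set A) : Set Z :=
  {z | ∃ a ∈ α, R a z}

/-- Composite of relations: `(R ; S) a c ↔ ∃ b, R a b ∧ S b c`. -/
def RelComp {A B C : Type*} (R : A → B → Prop) (S : B → C → Prop) : A → C → Prop :=
  fun a c => ∃ b, R a b ∧ S b c

/-- `σ ⊆ A ⊕ B` is a synchronisation when `g(σ_A) = h(σ_B)`. -/
def IsSync {A B Y : Type*} (g : A → Y → Prop) (h : B → Y → Prop)
    (σ : Set (A ⊕ B)) : Prop :=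
  RelImage g {a | Sum.inl a ∈ σ} = RelImage h {b | Sum.inr b ∈ σ}

/-- A path is a minimal non-empty synchronisation. -/
def IsPath {A B Y : Type*} (g : A → Y → Prop) (h : B → Y → Prop)
    (γ : Set (A ⊕ B)) : Prop :=
  IsSync g h γ ∧ γ.Nonempty ∧
    ∀ τ ⊆ γ, IsSync g h τ → τ.Nonempty → τ = γ

lemma relImage_diff {A Z : Type*} {R : A → Z → Prop} (hR : IsInjRel R) (α β : Set A) :
    RelImage R (α \ β) = RelImage R α \ RelImage R β := by
  ext z
  constructor
  · rintro ⟨a, ⟨ha, hna⟩, haz⟩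
    refine ⟨⟨a, ha, haz⟩, ?_⟩
    rintro ⟨a', ha', ha'z⟩
    exact hna (hR haz ha'z ▸ ha')
  · rintro ⟨⟨a, ha, haz⟩, hz⟩
    exact ⟨a, ⟨ha, fun hb => hz ⟨a, hb, haz⟩⟩, haz⟩

lemma isSync_diff {A B Y : Type*} {g : A → Y → Prop} {h : B → Y → Prop}
    (hg : IsInjRel g) (hh : IsInjRel h) {σ τ : Set (A ⊕ B)}
    (hσ : IsSync g h σ) (hτ : IsSync g h τ) : IsSync g h (σ \ τ) := by
  unfold IsSync at *
  have e1 : {a : A | Sum.inl a ∈ σ \ τ} = {a | Sum.inl a ∈ σ} \ {a | Sum.inl a ∈ τ} := rfl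
  have e2 : {b : B | Sum.inr b ∈ σ \ τ} = {b | Sum.inr b ∈ σ} \ {b | Sum.inr b ∈ τ} := rfl
  rw [e1, e2, relImage_diff hg, relImage_diff hh, hσ, hτ]

/-- For any link `c` of a synchronisation `σ`, the intersection of all
synchronisations containing `c` is a path containing `c` and contained in `σ`. -/
theorem path_through_link {A B Y : Type*} (g : A → Y → Prop) (h : B → Y → Prop)
    (hg : IsInjRel g) (hh : IsInjRel h)
    (σ : Set (A ⊕ B)) (hσ : IsSync g h σ) (c : A ⊕ B) (hc : c ∈ σ) :
    IsPath g h (⋂₀ {τ | IsSync g h τ ∧ c ∈ τ}) ∧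
      c ∈ ⋂₀ {τ | IsSync g h τ ∧ c ∈ τ} ∧
      ⋂₀ {τ | IsSync g h τ ∧ c ∈ τ} ⊆ σ := by
  set S : Set (Set (A ⊕ B)) := {τ | IsSync g h τ ∧ c ∈ τ} with hS
  have hσS : σ ∈ S := ⟨hσ, hc⟩
  have hcγ : c ∈ ⋂₀ S := fun τ hτ => hτ.2
  have hsub : ⋂₀ S ⊆ σ := Set.sInter_subset_of_mem hσS
  -- the intersection is a synchronisation
  have hsync : IsSync g h (⋂₀ S) := by
    unfold IsSync
    ext y
    constructor
    · rintro ⟨a, ha, hay⟩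
      -- a ∈ every τ ∈ S, in particular σ; y ∈ g(σ_A) = h(σ_B)
      have hyσ : y ∈ RelImage h {b | Sum.inr b ∈ σ} := by
        rw [← hσ]; exact ⟨a, ha σ hσS, hay⟩
      obtain ⟨b, hb, hby⟩ := hyσ
      refine ⟨b, ?_, hby⟩
      intro τ hτ
      have : y ∈ RelImage h {b | Sum.inr b ∈ τ} := by
        rw [← hτ.1]; exact ⟨a, ha τ hτ, hay⟩
      obtain ⟨b', hb', hb'y⟩ := this
      exact (hh hby hb'y) ▸ hb'
    · rintro ⟨b, hb, hby⟩
      have hyσ : y ∈ RelImage g {a | Sum.inl a ∈ σ} := by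
        rw [hσ]; exact ⟨b, hb σ hσS, hby⟩
      obtain ⟨a, ha, hay⟩ := hyσ
      refine ⟨a, ?_, hay⟩
      intro τ hτ
      have : y ∈ RelImage g {a | Sum.inl a ∈ τ} := by
        rw [hτ.1]; exact ⟨b, hb τ hτ, hby⟩
      obtain ⟨a', ha', ha'y⟩ := this
      exact (hg hay ha'y) ▸ ha'
  refine ⟨⟨hsync, ⟨c, hcγ⟩, ?_⟩, hcγ, hsub⟩
  intro τ hτsub hτsync hτne
  by_cases hcτ : c ∈ τ
  · exact Set.Subset.antisymm hτsub (Set.sInter_subset_of_mem ⟨hτsync, hcτ⟩)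
  · exfalso
    have hdiff : IsSync g h (⋂₀ S \ τ) := isSync_diff hg hh hsync hτsync
    have : ⋂₀ S ⊆ ⋂₀ S \ τ := Set.sInter_subset_of_mem ⟨hdiff, hcγ, hcτ⟩
    obtain ⟨x, hx⟩ := hτne
    exact (this (hτsub hx)).2 hx
end

section
/- Let P' be a type and p' : P' → A → Prop, q' : P' → B → Prop injective relations with (p' ; g) = (q' ; h), and for d : P' let σ(d) = {Sum.inl a | p' d a} ∪ {Sum.inr b | q' d b}. Define u : P' → P → Prop by u d γ ↔ γ ⊆ σ(d). Then (u ; p) = p' and (u ; q) = q'. -/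
theorem relImage_setOf_eq {A B C : Type*} (R : A → B → Prop) (S : B → C → Prop) (a : A) :
    RelImage S {b | R a b} = {c | RelComp R S a c} :=
  rfl

theorem isSync_inl_image_union_inr_image_iff {A B Y : Type*} {g : A → Y → Prop}
    {h : B → Y → Prop} {α : Set A} {β : Set B} :
    IsSync g h (Sum.inl '' α ∪ Sum.inr '' β) ↔ RelImage g α = RelImage h β := by
  simp [IsSync]

section Linked

variable {A B Y : Type*} {g : A → Y → Prop} {h : B → Y → Prop}

def Linked (g : A → Y → Prop) (h : B → Y → Prop) : A ⊕ B → A ⊕ B → Prop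
  | .inl a, .inr b => ∃ y, g a y ∧ h b y
  | .inr b, .inl a => ∃ y, g a y ∧ h b y
  | _, _ => False

instance : Std.Symm (Linked g h) where
  symm := by rintro (a | b) (a' | b') huv <;> exact huv

def linkComponent (g : A → Y → Prop) (h : B → Y → Prop) (x : A ⊕ B) : Set (A ⊕ B) :=
  {z | Relation.ReflTransGen (Linked g h) x z}

namespace IsSync

theorem mem_of_linked (hg : IsInjRel g) (hh : IsInjRel h) {τ : Set (A ⊕ B)}
    (hτ : IsSync g h τ) {u v : A ⊕ B} (hu : u ∈ τ) (huv : Linked g h u v) : v ∈ τ := by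
  rcases u with a | b <;> rcases v with a' | b' <;> obtain ⟨y, hay, hby⟩ := huv
  · obtain ⟨b, hb, hby'⟩ : y ∈ RelImage h {b | Sum.inr b ∈ τ} := hτ ▸ ⟨a, hu, hay⟩
    rwa [hh hby hby']
  · obtain ⟨a, ha, hay'⟩ : y ∈ RelImage g {a | Sum.inl a ∈ τ} := hτ.symm ▸ ⟨b, hu, hby⟩
    rwa [hg hay hay']

theorem linkComponent_subset (hg : IsInjRel g) (hh : IsInjRel h) {τ : Set (A ⊕ B)}
    (hτ : IsSync g h τ) {x : A ⊕ B} (hx : x ∈ τ) : linkComponent g h x ⊆ τ := by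
  intro z hz
  induction hz with
  | refl => exact hx
  | tail _ hlink ih => exact hτ.mem_of_linked hg hh ih hlink

theorem isSync_linkComponent {σ : Set (A ⊕ B)} (hσ : IsSync g h σ) {x : A ⊕ B}
    (hsub : linkComponent g h x ⊆ σ) : IsSync g h (linkComponent g h x) := by
  ext y
  constructor
  · rintro ⟨a, ha, hay⟩
    obtain ⟨b, -, hby⟩ : y ∈ RelImage h {b | Sum.inr b ∈ σ} := hσ ▸ ⟨a, hsub ha, hay⟩
    exact ⟨b, ha.tail ⟨y, hay, hby⟩, hby⟩
  · rintro ⟨b, hb, hby⟩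
    obtain ⟨a, -, hay⟩ : y ∈ RelImage g {a | Sum.inl a ∈ σ} := hσ.symm ▸ ⟨b, hsub hb, hby⟩
    exact ⟨a, hb.tail ⟨y, hay, hby⟩, hay⟩

theorem isPath_linkComponent (hg : IsInjRel g) (hh : IsInjRel h) {σ : Set (A ⊕ B)}
    (hσ : IsSync g h σ) {x : A ⊕ B} (hx : x ∈ σ) : IsPath g h (linkComponent g h x) := by
  refine ⟨hσ.isSync_linkComponent (hσ.linkComponent_subset hg hh hx), ⟨x, .refl⟩, ?_⟩
  rintro τ hτx hτ ⟨z, hz⟩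
  have hxτ : x ∈ τ := hτ.linkComponent_subset hg hh hz (Std.Symm.symm _ _ (hτx hz))
  exact hτx.antisymm (hτ.linkComponent_subset hg hh hxτ)

theorem exists_isPath_subset_mem_iff (hg : IsInjRel g) (hh : IsInjRel h) {σ : Set (A ⊕ B)}
    (hσ : IsSync g h σ) {x : A ⊕ B} :
    (∃ γ : {γ // IsPath g h γ}, γ.val ⊆ σ ∧ x ∈ γ.val) ↔ x ∈ σ :=
  ⟨fun ⟨_, hγσ, hx⟩ => hγσ hx, fun hx =>
    ⟨⟨_, hσ.isPath_linkComponent hg hh hx⟩, hσ.linkComponent_subset hg hh hx, .refl⟩⟩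

end IsSync

end Linked

theorem mediating_commutes_general {A B Y : Type*} (g : A → Y → Prop) (h : B → Y → Prop)
    (hg : IsInjRel g) (hh : IsInjRel h)
    {P' : Type*} (p' : P' → A → Prop) (q' : P' → B → Prop)
    (hcomm : RelComp p' g = RelComp q' h) :
    RelComp
        (fun (d : P') (γ : {γ : Set (A ⊕ B) // IsPath g h γ}) =>
          γ.val ⊆ (Sum.inl '' {a | p' d a}) ∪ (Sum.inr '' {b | q' d b}))
        (fun (γ : {γ : Set (A ⊕ B) // IsPath g h γ}) (a : A) => Sum.inl a ∈ γ.val) = p' ∧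
      RelComp
        (fun (d : P') (γ : {γ : Set (A ⊕ B) // IsPath g h γ}) =>
          γ.val ⊆ (Sum.inl '' {a | p' d a}) ∪ (Sum.inr '' {b | q' d b}))
        (fun (γ : {γ : Set (A ⊕ B) // IsPath g h γ}) (b : B) => Sum.inr b ∈ γ.val) = q' := by
  have hσ (d : P') : IsSync g h (Sum.inl '' {a | p' d a} ∪ Sum.inr '' {b | q' d b}) :=
    isSync_inl_image_union_inr_image_iff.2 (by rw [relImage_setOf_eq, relImage_setOf_eq, hcomm])
  refine ⟨funext₂ fun d a => propext ?_, funext₂ fun d b => propext ?_⟩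
  · exact ((hσ d).exists_isPath_subset_mem_iff hg hh).trans (by simp)
  · exact ((hσ d).exists_isPath_subset_mem_iff hg hh).trans (by simp)

/-- The mediating relation `u d γ ↔ γ ⊆ σ(d)` satisfies `(u ; p) = p'` and `(u ; q) = q'`. -/
theorem mediating_commutes {A B Y : Type*} (g : A → Y → Prop) (h : B → Y → Prop)
    (hg : IsInjRel g) (hh : IsInjRel h)
    {P' : Type*} (p' : P' → A → Prop) (q' : P' → B → Prop)
    (hp' : IsInjRel p') (hq' : IsInjRel q')
    (hcomm : RelComp p' g = RelComp q' h) :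
    RelComp
        (fun (d : P') (γ : {γ : Set (A ⊕ B) // IsPath g h γ}) =>
          γ.val ⊆ (Sum.inl '' {a | p' d a}) ∪ (Sum.inr '' {b | q' d b}))
        (fun (γ : {γ : Set (A ⊕ B) // IsPath g h γ}) (a : A) => Sum.inl a ∈ γ.val) = p' ∧
      RelComp
        (fun (d : P') (γ : {γ : Set (A ⊕ B) // IsPath g h γ}) =>
          γ.val ⊆ (Sum.inl '' {a | p' d a}) ∪ (Sum.inr '' {b | q' d b}))
        (fun (γ : {γ : Set (A ⊕ B) // IsPath g h γ}) (b : B) => Sum.inr b ∈ γ.val) = q' :=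
  mediating_commutes_general g h hg hh p' q' hcomm
end

section
/- Uniqueness of the mediating relation: let P' be a type and u₁, u₂ : P' → P → Prop injective relations such that (u₁ ; p) = (u₂ ; p) and (u₁ ; q) = (u₂ ; q). Then u₁ = u₂. -/
/-- Intersection of two synchronisations is a synchronisation (when g, h are injective). -/
theorem inter_sync {A B Y : Type*} {g : A → Y → Prop} {h : B → Y → Prop}
    (hg : IsInjRel g) (hh : IsInjRel h) {σ τ : Set (A ⊕ B)}
    (hσ : IsSync g h σ) (hτ : IsSync g h τ) : IsSync g h (σ ∩ τ) := by
  unfold IsSync RelImage at *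
  ext y
  constructor
  · rintro ⟨a, ⟨haσ, haτ⟩, hga⟩
    have h1 : y ∈ {z | ∃ b ∈ {b | Sum.inr b ∈ σ}, h b z} := by
      rw [← hσ]; exact ⟨a, haσ, hga⟩
    have h2 : y ∈ {z | ∃ b ∈ {b | Sum.inr b ∈ τ}, h b z} := by
      rw [← hτ]; exact ⟨a, haτ, hga⟩
    obtain ⟨b, hbσ, hby⟩ := h1
    obtain ⟨b', hbτ, hby'⟩ := h2
    exact ⟨b, ⟨hbσ, hh hby hby' ▸ hbτ⟩, hby⟩
  · rintro ⟨b, ⟨hbσ, hbτ⟩, hhb⟩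
    have h1 : y ∈ {z | ∃ a ∈ {a | Sum.inl a ∈ σ}, g a z} := by
      rw [hσ]; exact ⟨b, hbσ, hhb⟩
    have h2 : y ∈ {z | ∃ a ∈ {a | Sum.inl a ∈ τ}, g a z} := by
      rw [hτ]; exact ⟨b, hbτ, hhb⟩
    obtain ⟨a, haσ, hay⟩ := h1
    obtain ⟨a', haτ, hay'⟩ := h2
    exact ⟨a, ⟨haσ, hg hay hay' ▸ haτ⟩, hay⟩

/-- Two paths that intersect are equal. -/
theorem path_eq_of_inter {A B Y : Type*} {g : A → Y → Prop} {h : B → Y → Prop}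
    (hg : IsInjRel g) (hh : IsInjRel h) {γ δ : Set (A ⊕ B)}
    (hγ : IsPath g h γ) (hδ : IsPath g h δ) (hne : (γ ∩ δ).Nonempty) : γ = δ := by
  have hsync := inter_sync hg hh hγ.1 hδ.1
  have e1 := hγ.2.2 (γ ∩ δ) Set.inter_subset_left hsync hne
  have e2 := hδ.2.2 (γ ∩ δ) Set.inter_subset_right hsync hne
  rw [← e1, e2]

theorem mediating_dir {A B Y : Type*} (g : A → Y → Prop) (h : B → Y → Prop)
    (hg : IsInjRel g) (hh : IsInjRel h)
    {P' : Type*} (u₁ u₂ : P' → {γ : Set (A ⊕ B) // IsPath g h γ} → Prop)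
    (hp : RelComp u₁ (fun γ (a : A) => Sum.inl a ∈ γ.val) =
          RelComp u₂ (fun γ (a : A) => Sum.inl a ∈ γ.val))
    (hq : RelComp u₁ (fun γ (b : B) => Sum.inr b ∈ γ.val) =
          RelComp u₂ (fun γ (b : B) => Sum.inr b ∈ γ.val))
    {x : P'} {γ : {γ : Set (A ⊕ B) // IsPath g h γ}} (hx : u₁ x γ) : u₂ x γ := by
  obtain ⟨e, he⟩ := γ.2.2.1
  cases e with
  | inl a =>
    have h1 : RelComp u₂ (fun γ (a : A) => Sum.inl a ∈ γ.val) x a := by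
      rw [← hp]; exact ⟨γ, hx, he⟩
    obtain ⟨δ, hδ, haδ⟩ := h1
    have : γ.val = δ.val :=
      path_eq_of_inter hg hh γ.2 δ.2 ⟨Sum.inl a, he, haδ⟩
    rwa [Subtype.ext this]
  | inr b =>
    have h1 : RelComp u₂ (fun γ (b : B) => Sum.inr b ∈ γ.val) x b := by
      rw [← hq]; exact ⟨γ, hx, he⟩
    obtain ⟨δ, hδ, hbδ⟩ := h1
    have : γ.val = δ.val :=
      path_eq_of_inter hg hh γ.2 δ.2 ⟨Sum.inr b, he, hbδ⟩
    rwa [Subtype.ext this]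

/-- Uniqueness of the mediating relation into the object of paths. -/
theorem mediating_unique {A B Y : Type*} (g : A → Y → Prop) (h : B → Y → Prop)
    (hg : IsInjRel g) (hh : IsInjRel h)
    {P' : Type*} (u₁ u₂ : P' → {γ : Set (A ⊕ B) // IsPath g h γ} → Prop)
    (hu₁ : IsInjRel u₁) (hu₂ : IsInjRel u₂)
    (hp : RelComp u₁ (fun γ (a : A) => Sum.inl a ∈ γ.val) =
          RelComp u₂ (fun γ (a : A) => Sum.inl a ∈ γ.val))
    (hq : RelComp u₁ (fun γ (b : B) => Sum.inr b ∈ γ.val) =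
          RelComp u₂ (fun γ (b : B) => Sum.inr b ∈ γ.val)) :
    u₁ = u₂ := by
  funext x γ
  exact propext ⟨mediating_dir g h hg hh u₁ u₂ hp hq,
    mediating_dir g h hg hh u₂ u₁ hp.symm hq.symm⟩
end

section
/- The path construction is a pullback in the category of injective relations: the projection relations p and q are injective and satisfy (p ; g) = (q ; h), and for every type P' and all injective relations p' : P' → A → Prop, q' : P' → B → Prop with (p' ; g) = (q' ; h), there exists a unique injective relation u : P' → P → Prop such that (u ; p) = p' and (u ; q) = q'. -/
section Aux

variable {A B Y : Type*} {g : A → Y → Prop} {h : B → Y → Prop}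

lemma isSync_iff {σ : Set (A ⊕ B)} :
    IsSync g h σ ↔ ∀ y, (∃ a, Sum.inl a ∈ σ ∧ g a y) ↔ (∃ b, Sum.inr b ∈ σ ∧ h b y) := by
  simp only [IsSync, Set.ext_iff, RelImage, Set.mem_setOf_eq]

lemma sync_sInter (hg : IsInjRel g) (hh : IsInjRel h)
    {S : Set (Set (A ⊕ B))} (hS : S.Nonempty) (hmem : ∀ σ ∈ S, IsSync g h σ) :
    IsSync g h (⋂₀ S) := by
  rw [isSync_iff]
  intro y
  constructor
  · rintro ⟨a, ha, hay⟩
    obtain ⟨σ0, h0⟩ := hS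
    obtain ⟨b, hb, hby⟩ := (isSync_iff.mp (hmem σ0 h0) y).mp
      ⟨a, Set.mem_sInter.mp ha σ0 h0, hay⟩
    refine ⟨b, Set.mem_sInter.mpr fun σ hσ => ?_, hby⟩
    obtain ⟨b', hb', hb'y⟩ := (isSync_iff.mp (hmem σ hσ) y).mp
      ⟨a, Set.mem_sInter.mp ha σ hσ, hay⟩
    rwa [hh hby hb'y]
  · rintro ⟨b, hb, hby⟩
    obtain ⟨σ0, h0⟩ := hS
    obtain ⟨a, ha, hay⟩ := (isSync_iff.mp (hmem σ0 h0) y).mpr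
      ⟨b, Set.mem_sInter.mp hb σ0 h0, hby⟩
    refine ⟨a, Set.mem_sInter.mpr fun σ hσ => ?_, hay⟩
    obtain ⟨a', ha', ha'y⟩ := (isSync_iff.mp (hmem σ hσ) y).mpr
      ⟨b, Set.mem_sInter.mp hb σ hσ, hby⟩
    rwa [hg hay ha'y]

lemma sync_diff (hg : IsInjRel g) (hh : IsInjRel h)
    {σ τ : Set (A ⊕ B)} (hσ : IsSync g h σ) (hτ : IsSync g h τ) :
    IsSync g h (σ \ τ) := by
  rw [isSync_iff] at hσ hτ ⊢
  intro y
  constructor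
  · rintro ⟨a, ⟨haσ, haτ⟩, hay⟩
    obtain ⟨b, hbσ, hby⟩ := (hσ y).mp ⟨a, haσ, hay⟩
    refine ⟨b, ⟨hbσ, fun hbτ => ?_⟩, hby⟩
    obtain ⟨a', ha'τ, ha'y⟩ := (hτ y).mpr ⟨b, hbτ, hby⟩
    exact haτ (hg ha'y hay ▸ ha'τ)
  · rintro ⟨b, ⟨hbσ, hbτ⟩, hby⟩
    obtain ⟨a, haσ, hay⟩ := (hσ y).mpr ⟨b, hbσ, hby⟩
    refine ⟨a, ⟨haσ, fun haτ => ?_⟩, hay⟩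
    obtain ⟨b', hb'τ, hb'y⟩ := (hτ y).mp ⟨a, haτ, hay⟩
    exact hbτ (hh hb'y hby ▸ hb'τ)

lemma path_through (hg : IsInjRel g) (hh : IsInjRel h)
    {σ : Set (A ⊕ B)} (hσ : IsSync g h σ) {x : A ⊕ B} (hx : x ∈ σ) :
    ∃ γ, IsPath g h γ ∧ x ∈ γ ∧ γ ⊆ σ := by
  set S : Set (Set (A ⊕ B)) := {τ | τ ⊆ σ ∧ IsSync g h τ ∧ x ∈ τ} with hSdef
  have hσS : σ ∈ S := ⟨subset_rfl, hσ, hx⟩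
  have hγsync : IsSync g h (⋂₀ S) :=
    sync_sInter hg hh ⟨σ, hσS⟩ (fun τ hτ => hτ.2.1)
  have hxγ : x ∈ ⋂₀ S := Set.mem_sInter.mpr fun τ hτ => hτ.2.2
  have hγσ : ⋂₀ S ⊆ σ := Set.sInter_subset_of_mem hσS
  refine ⟨⋂₀ S, ⟨hγsync, ⟨x, hxγ⟩, ?_⟩, hxγ, hγσ⟩
  intro τ hτγ hτs hτne
  by_cases hxτ : x ∈ τ
  · exact Set.Subset.antisymm hτγ
      (Set.sInter_subset_of_mem (⟨hτγ.trans hγσ, hτs, hxτ⟩ : τ ∈ S))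
  · exfalso
    have hmem : (⋂₀ S) \ τ ∈ S :=
      ⟨(Set.diff_subset).trans hγσ, sync_diff hg hh hγsync hτs, hxγ, hxτ⟩
    obtain ⟨t, ht⟩ := hτne
    exact (Set.mem_sInter.mp (hτγ ht) _ hmem).2 ht

lemma path_eq_of_mem (hg : IsInjRel g) (hh : IsInjRel h)
    {γ γ' : Set (A ⊕ B)} (hγ : IsPath g h γ) (hγ' : IsPath g h γ')
    {x : A ⊕ B} (hx : x ∈ γ) (hx' : x ∈ γ') : γ = γ' := by
  have hint : IsSync g h (γ ∩ γ') := by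
    have := sync_sInter hg hh (S := {γ, γ'}) ⟨γ, by simp⟩
      (by rintro τ (rfl | rfl); exacts [hγ.1, hγ'.1])
    simpa using this
  have hne : (γ ∩ γ').Nonempty := ⟨x, hx, hx'⟩
  have h1 := hγ.2.2 (γ ∩ γ') Set.inter_subset_left hint hne
  have h2 := hγ'.2.2 (γ ∩ γ') Set.inter_subset_right hint hne
  rw [← h1, h2]

end Aux

/-- The set of paths, with the projection relations `p` and `q`, forms a pullback
of `g` and `h` in the category of injective relations. -/
theorem paths_isPullback {A B Y : Type*} (g : A → Y → Prop) (h : B → Y → Prop)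
    (hg : IsInjRel g) (hh : IsInjRel h) :
    IsInjRel (fun (γ : {γ : Set (A ⊕ B) // IsPath g h γ}) (a : A) => Sum.inl a ∈ γ.val) ∧
    IsInjRel (fun (γ : {γ : Set (A ⊕ B) // IsPath g h γ}) (b : B) => Sum.inr b ∈ γ.val) ∧
    RelComp (fun (γ : {γ : Set (A ⊕ B) // IsPath g h γ}) (a : A) => Sum.inl a ∈ γ.val) g =
      RelComp (fun (γ : {γ : Set (A ⊕ B) // IsPath g h γ}) (b : B) => Sum.inr b ∈ γ.val) h ∧
    ∀ (P' : Type*) (p' : P' → A → Prop) (q' : P' → B → Prop),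
      IsInjRel p' → IsInjRel q' → RelComp p' g = RelComp q' h →
      ∃! u : P' → {γ : Set (A ⊕ B) // IsPath g h γ} → Prop,
        IsInjRel u ∧
        RelComp u (fun γ (a : A) => Sum.inl a ∈ γ.val) = p' ∧
        RelComp u (fun γ (b : B) => Sum.inr b ∈ γ.val) = q' := by
  refine ⟨?_, ?_, ?_, ?_⟩
  · intro γ γ' a hγ hγ'
    exact Subtype.ext (path_eq_of_mem hg hh γ.2 γ'.2 hγ hγ')
  · intro γ γ' b hγ hγ'
    exact Subtype.ext (path_eq_of_mem hg hh γ.2 γ'.2 hγ hγ')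
  · funext γ y
    exact propext (isSync_iff.mp γ.2.1 y)
  · intro P' p' q' hp' hq' hpq
    set σ' : P' → Set (A ⊕ B) := fun x => {z | Sum.elim (p' x) (q' x) z} with hσ'def
    have hla : ∀ x a, Sum.inl a ∈ σ' x ↔ p' x a := fun x a => Iff.rfl
    have hrb : ∀ x b, Sum.inr b ∈ σ' x ↔ q' x b := fun x b => Iff.rfl
    have hσ'sync : ∀ x, IsSync g h (σ' x) := by
      intro x
      rw [isSync_iff]
      intro y
      exact iff_of_eq (congrFun (congrFun hpq x) y)
    refine ⟨fun x γ => γ.val ⊆ σ' x, ⟨?_, ?_, ?_⟩, ?_⟩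
    · -- injective
      intro x x' γ hx hx'
      obtain ⟨s, hs⟩ := γ.2.2.1
      cases s with
      | inl a => exact hp' (hx hs) (hx' hs)
      | inr b => exact hq' (hx hs) (hx' hs)
    · -- u ; p = p'
      funext x a
      refine propext ⟨fun ⟨γ, hsub, ha⟩ => hsub ha, fun hpa => ?_⟩
      obtain ⟨γ, hγpath, hmem, hsub⟩ :=
        path_through hg hh (hσ'sync x) ((hla x a).mpr hpa)
      exact ⟨⟨γ, hγpath⟩, hsub, hmem⟩
    · -- u ; q = q'
      funext x b
      refine propext ⟨fun ⟨γ, hsub, hb⟩ => hsub hb, fun hqb => ?_⟩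
      obtain ⟨γ, hγpath, hmem, hsub⟩ :=
        path_through hg hh (hσ'sync x) ((hrb x b).mpr hqb)
      exact ⟨⟨γ, hγpath⟩, hsub, hmem⟩
    · -- uniqueness
      rintro v ⟨hvinj, hvp, hvq⟩
      have hvsub : ∀ x γ, v x γ → γ.val ⊆ σ' x := by
        intro x γ hv s hs
        cases s with
        | inl a =>
          have : p' x a := by rw [← hvp]; exact ⟨γ, hv, hs⟩
          exact this
        | inr b =>
          have : q' x b := by rw [← hvq]; exact ⟨γ, hv, hs⟩
          exact this
      funext x γ
      refine propext ⟨hvsub x γ, fun hsub => ?_⟩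
      obtain ⟨s, hs⟩ := γ.2.2.1
      cases s with
      | inl a =>
        have hpa : p' x a := hsub hs
        rw [← hvp] at hpa
        obtain ⟨γ', hv', hmem'⟩ := hpa
        have : γ' = γ := Subtype.ext (path_eq_of_mem hg hh γ'.2 γ.2 hmem' hs)
        rwa [← this]
      | inr b =>
        have hqb : q' x b := hsub hs
        rw [← hvq] at hqb
        obtain ⟨γ', hv', hmem'⟩ := hqb
        have : γ' = γ := Subtype.ext (path_eq_of_mem hg hh γ'.2 γ.2 hmem' hs)
        rwa [← this]
end
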